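/- For every n ≥ 1, the set ⟦⟨start, s_n⟩⟧_OI of outputs of the mtt M_ex in OI-mode on input s_n equals the set of all perfect {f,g}-trees of height 2^n; in particular, this set has cardinality 2^(2^(2^n) − 1). -/

import Mathlib

/-!
In OI mode every occurrence of a parameter is evaluated independently. So, by induction on `k`,
`⟦⟨double, s_k⟩(u)⟧_OI` is the set of perfect `{f,g}`-trees of height `2^k` whose subtrees at
depth `2^k` are arbitrary members of `⟦u⟧_OI`: the rule for `a(x₁)` nests two such calls, and
stacking perfect trees adds their heights. With `u = e` the two nested calls of the start rule
give exactly the perfect trees of height `2^(m+1)`. A perfect tree of height `h + 1` is a root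
label in `{f, g}` and two perfect trees of height `h`, so their number `c_h` satisfies
`c_{h+1} = 2 c_h²`, whence `c_h = 2^(2^h - 1)`.
-/


namespace MttF

/-- Finite ordered trees over a label type `α`. -/
inductive RTree (α : Type) : Type
  | node : α → List (RTree α) → RTree α

namespace RTree

variable {α β : Type}

/-- The root label of a tree. -/
def label : RTree α → α
  | node a _ => a

/-- The list of immediate subtrees of a tree. -/
def children : RTree α → List (RTree α)
  | node _ ts => ts

/-- Relabelling of trees. -/
def map (f : α → β) : RTree α → RTree β
  | node a ts => node (f a) (ts.attach.map (fun x => map f x.1))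
decreasing_by
  have := List.sizeOf_lt_of_mem x.2
  simp only [node.sizeOf_spec]
  omega

/-- A tree is well-formed with respect to a rank function if every node labeled
by a rank-`k` symbol has exactly `k` children. `T_Σ` is the set of well-formed
trees over `Σ`. -/
inductive Wf (rk : α → ℕ) : RTree α → Prop
  | node {a : α} {ts : List (RTree α)} :
      ts.length = rk a → (∀ t ∈ ts, Wf rk t) → Wf rk (node a ts)

/-- `Subtree u t` holds iff `u` is a subtree of `t` (rooted at some node of `t`). -/
inductive Subtree : RTree α → RTree α → Prop
  | refl (t : RTree α) : Subtree t t
  | step {u c : RTree α} {a : α} {ts : List (RTree α)} :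
      c ∈ ts → Subtree u c → Subtree u (node a ts)

end RTree

/-- Labels for output trees with parameters: trees over `Δ ∪ Y`. -/
inductive OLab (Δ : Type) : Type
  | out (d : Δ)
  | param (i : ℕ)

/-- Labels for right-hand sides of mtt rules: trees over `Δ ∪ (Q × X) ∪ Y`
(the second component of a call is the index of the input variable `x`). -/
inductive RLab (Δ Q : Type) : Type
  | out (d : Δ)
  | call (q : Q) (x : ℕ)
  | param (i : ℕ)

/-- Labels for "semantic" trees over `Δ ∪ (Q × T_Σ) ∪ Y`. -/
inductive SLab (Γ Δ Q : Type) : Type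
  | out (d : Δ)
  | call (q : Q) (s : RTree Γ)
  | param (i : ℕ)

/-- Trees over `Δ ∪ Y`. -/
abbrev OT (Δ : Type) := RTree (OLab Δ)
/-- Right-hand side trees over `Δ ∪ (Q × X) ∪ Y`. -/
abbrev Rhs (Δ Q : Type) := RTree (RLab Δ Q)
/-- Trees over `Δ ∪ (Q × T_Σ) ∪ Y`. -/
abbrev ST (Γ Δ Q : Type) := RTree (SLab Γ Δ Q)

/-- First-order substitution `x_i := ss_i` on a label of a right-hand side
(indices are 0-based; for well-formed rules the index is always in range). -/
def RLab.subst {Γ Δ Q : Type} (ss : List (RTree Γ)) : RLab Δ Q → SLab Γ Δ Q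
  | .out d => .out d
  | .param i => .param i
  | .call q x =>
    match ss[x]? with
    | some s => .call q s
    | none => .param x

/-- `r[x_1/s_1, …, x_k/s_k]`. -/
def substX {Γ Δ Q : Type} (ss : List (RTree Γ)) (r : Rhs Δ Q) : ST Γ Δ Q :=
  r.map (RLab.subst ss)

/-- Second-order (parameter) substitution `t[y_1/ts_1, …, y_n/ts_n]`
(`y` indices are 0-based). -/
def substY {Δ : Type} (ts : List (OT Δ)) : OT Δ → OT Δ
  | .node (.param i) _ => ts.getD i (.node (.param i) [])
  | .node (.out d) us => .node (.out d) (us.attach.map (fun x => substY ts x.1))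
decreasing_by
  have := List.sizeOf_lt_of_mem x.2
  simp only [RTree.node.sizeOf_spec]
  omega

/-- The embedding of `T_Δ` into the trees over `Δ ∪ Y`. -/
def embed {Δ : Type} (t : RTree Δ) : OT Δ := t.map OLab.out

variable {Γ Δ Q : Type}

/-- IO (call-by-value, inside-out) semantics: `SemIO rsel u t` holds iff
`t ∈ ⟦u⟧_IO`.  The rules of the transducer are given by a selector
`rsel q σ ss`: the set of right-hand sides of the `⟨q,σ⟩`-rules that are
applicable when the children of the current input node are `ss` (for a plain
mtt this does not depend on `ss`, cf. `plainSel`). -/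
inductive SemIO (rsel : Q → Γ → List (RTree Γ) → Set (Rhs Δ Q)) :
    ST Γ Δ Q → OT Δ → Prop
  | param (i : ℕ) :
      SemIO rsel (.node (.param i) []) (.node (.param i) [])
  | out {d : Δ} {us : List (ST Γ Δ Q)} {ts : List (OT Δ)}
      (hlen : ts.length = us.length)
      (h : ∀ i : Fin us.length, SemIO rsel (us.get i) (ts.get (i.cast hlen.symm))) :
      SemIO rsel (.node (.out d) us) (.node (.out d) ts)
  | call {q : Q} {σ : Γ} {ss : List (RTree Γ)} {us : List (ST Γ Δ Q)}
      {r : Rhs Δ Q} {t₀ : OT Δ} {ts : List (OT Δ)}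
      (hr : r ∈ rsel q σ ss)
      (h₀ : SemIO rsel (substX ss r) t₀)
      (hlen : ts.length = us.length)
      (h : ∀ i : Fin us.length, SemIO rsel (us.get i) (ts.get (i.cast hlen.symm))) :
      SemIO rsel (.node (.call q (.node σ ss)) us) (substY ts t₀)

mutual
/-- OI (call-by-name, outside-in) semantics: `SemOI rsel u t` holds iff
`t ∈ ⟦u⟧_OI`. -/
inductive SemOI (rsel : Q → Γ → List (RTree Γ) → Set (Rhs Δ Q)) :
    ST Γ Δ Q → OT Δ → Prop
  | param (i : ℕ) :
      SemOI rsel (.node (.param i) []) (.node (.param i) [])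
  | out {d : Δ} {us : List (ST Γ Δ Q)} {ts : List (OT Δ)}
      (hlen : ts.length = us.length)
      (h : ∀ i : Fin us.length, SemOI rsel (us.get i) (ts.get (i.cast hlen.symm))) :
      SemOI rsel (.node (.out d) us) (.node (.out d) ts)
  | call {q : Q} {σ : Γ} {ss : List (RTree Γ)} {us : List (ST Γ Δ Q)}
      {r : Rhs Δ Q} {t₀ : OT Δ} {t : OT Δ}
      (hr : r ∈ rsel q σ ss)
      (h₀ : SemOI rsel (substX ss r) t₀)
      (hs : OISub rsel us t₀ t) :
      SemOI rsel (.node (.call q (.node σ ss)) us) t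

/-- OI-substitution: `OISub rsel us t₀ t` holds iff `t ∈ (t₀ ←_OI (⟦us_1⟧_OI, …, ⟦us_n⟧_OI))`,
i.e. `t` is obtained from `t₀` by independently replacing every occurrence of a parameter
`y_i` by some member of `⟦us_i⟧_OI`. -/
inductive OISub (rsel : Q → Γ → List (RTree Γ) → Set (Rhs Δ Q)) :
    List (ST Γ Δ Q) → OT Δ → OT Δ → Prop
  | param {us : List (ST Γ Δ Q)} {i : ℕ} {t : OT Δ}
      (h : i < us.length) (hsem : SemOI rsel (us.get ⟨i, h⟩) t) :
      OISub rsel us (.node (.param i) []) t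
  | out {us : List (ST Γ Δ Q)} {d : Δ} {ts ts' : List (OT Δ)}
      (hlen : ts'.length = ts.length)
      (h : ∀ i : Fin ts.length, OISub rsel us (ts.get i) (ts'.get (i.cast hlen.symm))) :
      OISub rsel us (.node (.out d) ts) (.node (.out d) ts')
end

/-- The rule selector of a plain mtt: the applicable rules do not depend on the
child subtrees of the current input node. -/
def plainSel (rules : Q → Γ → Set (Rhs Δ Q)) :
    Q → Γ → List (RTree Γ) → Set (Rhs Δ Q) :=
  fun q σ _ => rules q σ

/-- The translation `τ_{IO,M} ⊆ T_Σ × T_Δ` realized in IO mode. -/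
def tauIO (rankΓ : Γ → ℕ) (rankΔ : Δ → ℕ)
    (rsel : Q → Γ → List (RTree Γ) → Set (Rhs Δ Q)) (q₀ : Q) :
    Set (RTree Γ × RTree Δ) :=
  {p | p.1.Wf rankΓ ∧ p.2.Wf rankΔ ∧
       SemIO rsel (.node (.call q₀ p.1) []) (embed p.2)}

/-- The translation `τ_{OI,M} ⊆ T_Σ × T_Δ` realized in OI mode. -/
def tauOI (rankΓ : Γ → ℕ) (rankΔ : Δ → ℕ)
    (rsel : Q → Γ → List (RTree Γ) → Set (Rhs Δ Q)) (q₀ : Q) :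
    Set (RTree Γ × RTree Δ) :=
  {p | p.1.Wf rankΓ ∧ p.2.Wf rankΔ ∧
       SemOI rsel (.node (.call q₀ p.1) []) (embed p.2)}

/-- Well-formedness of a right-hand side of a rule of an mtt whose current
input symbol has rank `k` and whose current state has rank `m`: output symbols
have the correct number of children, state calls `⟨q', x_i⟩` have `rank q'`
children and `i < k`, and parameters `y_j` satisfy `j < m`. -/
inductive RhsWf (rankΔ : Δ → ℕ) (rankQ : Q → ℕ) (k m : ℕ) : Rhs Δ Q → Prop
  | out {d : Δ} {ts : List (Rhs Δ Q)}
      (hlen : ts.length = rankΔ d) (h : ∀ t ∈ ts, RhsWf rankΔ rankQ k m t) :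
      RhsWf rankΔ rankQ k m (.node (.out d) ts)
  | call {q : Q} {x : ℕ} {ts : List (Rhs Δ Q)}
      (hx : x < k) (hlen : ts.length = rankQ q)
      (h : ∀ t ∈ ts, RhsWf rankΔ rankQ k m t) :
      RhsWf rankΔ rankQ k m (.node (.call q x) ts)
  | param {i : ℕ} (hi : i < m) : RhsWf rankΔ rankQ k m (.node (.param i) [])

/-- Well-formedness of a tree over `Δ ∪ (Q × T_Σ) ∪ Y`. -/
inductive STWf (rankΓ : Γ → ℕ) (rankΔ : Δ → ℕ) (rankQ : Q → ℕ) : ST Γ Δ Q → Prop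
  | out {d : Δ} {ts : List (ST Γ Δ Q)}
      (hlen : ts.length = rankΔ d) (h : ∀ t ∈ ts, STWf rankΓ rankΔ rankQ t) :
      STWf rankΓ rankΔ rankQ (.node (.out d) ts)
  | call {q : Q} {s : RTree Γ} {ts : List (ST Γ Δ Q)}
      (hs : s.Wf rankΓ) (hlen : ts.length = rankQ q)
      (h : ∀ t ∈ ts, STWf rankΓ rankΔ rankQ t) :
      STWf rankΓ rankΔ rankQ (.node (.call q s) ts)
  | param (i : ℕ) : STWf rankΓ rankΔ rankQ (.node (.param i) [])

/-- A tree over `Δ ∪ (Q × T_Σ) ∪ Y` is parameter-free if no `y_i` occurs in it. -/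
inductive NoParam : ST Γ Δ Q → Prop
  | node {l : SLab Γ Δ Q} {ts : List (ST Γ Δ Q)}
      (hl : ∀ i : ℕ, l ≠ .param i) (h : ∀ t ∈ ts, NoParam t) :
      NoParam (.node l ts)

/-- A macro tree transducer `M = (Q, Σ, Δ, q₀, R)`.  The alphabets `Γ` (input),
`Δ` (output) and the set `Q` of states are ranked; `q₀` has rank `0`; `rules q σ`
is the (finite) set `R_{q,σ}` of right-hand sides of the `⟨q,σ⟩`-rules, and every
right-hand side is a well-formed tree over `Δ ∪ (Q × X_k) ∪ Y_m`. -/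
structure MTT (Γ Δ Q : Type) where
  rankΓ : Γ → ℕ
  rankΔ : Δ → ℕ
  rankQ : Q → ℕ
  q₀ : Q
  q₀_rank : rankQ q₀ = 0
  rules : Q → Γ → Set (Rhs Δ Q)
  rules_fin : ∀ q σ, (rules q σ).Finite
  rules_wf : ∀ q σ, ∀ r ∈ rules q σ, RhsWf rankΔ rankQ (rankΓ σ) (rankQ q) r

/-- The rule selector of a plain mtt. -/
def MTT.sel (M : MTT Γ Δ Q) : Q → Γ → List (RTree Γ) → Set (Rhs Δ Q) :=
  plainSel M.rules

end MttF
namespace MttF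

/-- Input alphabet of `M_ex`: `a` of rank 1 and `e` of rank 0. -/
inductive GE : Type | a | e

def rkGE : GE → ℕ | .a => 1 | .e => 0

/-- Output alphabet of `M_ex`: `f`, `g` of rank 2 and `e` of rank 0. -/
inductive DE : Type | f | g | e

def rkDE : DE → ℕ | .f => 2 | .g => 2 | .e => 0

/-- States of `M_ex`: `start` of rank 0 and `double` of rank 1. -/
inductive QE : Type | start | double

def rkQE : QE → ℕ | .start => 0 | .double => 1

/-- The rules of `M_ex`:
`⟨start, a(x₁)⟩ → ⟨double, x₁⟩(⟨double, x₁⟩(e))`,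
`⟨double, a(x₁)⟩(y₁) → ⟨double, x₁⟩(⟨double, x₁⟩(y₁))`,
`⟨double, e⟩(y₁) → f(y₁,y₁)`, and `⟨double, e⟩(y₁) → g(y₁,y₁)`. -/
def rulesEx : QE → GE → Set (Rhs DE QE)
  | .start, .a =>
      {.node (.call .double 0) [.node (.call .double 0) [.node (.out .e) []]]}
  | .double, .a =>
      {.node (.call .double 0) [.node (.call .double 0) [.node (.param 0) []]]}
  | .double, .e =>
      {.node (.out .f) [.node (.param 0) [], .node (.param 0) []],
       .node (.out .g) [.node (.param 0) [], .node (.param 0) []]}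
  | .start, .e => ∅

/-- The input tree `s_n = a(a(⋯a(e)⋯))` with `n` `a`-nodes. -/
def sN : ℕ → RTree GE
  | 0 => .node .e []
  | n+1 => .node .a [sN n]

/-- `Perfect h t` holds iff `t` is a perfect `{f,g}`-tree of height `h`:
every leaf is labeled `e` and lies at depth exactly `h`, and every internal
node is labeled `f` or `g` (and has two children). -/
inductive Perfect : ℕ → RTree DE → Prop
  | leaf : Perfect 0 (.node .e [])
  | node {h : ℕ} {d : DE} {l r : RTree DE} (hd : d = .f ∨ d = .g)
      (hl : Perfect h l) (hr : Perfect h r) :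
      Perfect (h+1) (.node d [l, r])

theorem RTree.map_node {α β : Type} (f : α → β) (a : α) (ts : List (RTree α)) :
    (RTree.node a ts).map f = .node (f a) (ts.map (RTree.map f)) := by
  rw [RTree.map, List.attach_map_val]

theorem substX_node {Γ Δ Q : Type} (ss : List (RTree Γ)) (l : RLab Δ Q) (ts : List (Rhs Δ Q)) :
    substX ss (.node l ts) = .node (l.subst ss) (ts.map (substX ss)) :=
  RTree.map_node _ _ _

theorem embed_node {Δ : Type} (d : Δ) (ts : List (RTree Δ)) :
    embed (.node d ts) = .node (.out d) (ts.map embed) :=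
  RTree.map_node _ _ _

section OISemantics

variable {Γ Δ Q : Type} {rsel : Q → Γ → List (RTree Γ) → Set (Rhs Δ Q)}

theorem semOI_param_iff {i : ℕ} {t : OT Δ} :
    SemOI rsel (.node (.param i) []) t ↔ t = .node (.param i) [] := by
  constructor
  · rintro ⟨⟩
    rfl
  · rintro rfl
    exact .param i

theorem semOI_out_iff {d : Δ} {us : List (ST Γ Δ Q)} {t : OT Δ} :
    SemOI rsel (.node (.out d) us) t ↔
      ∃ ts, t = .node (.out d) ts ∧ List.Forall₂ (SemOI rsel) us ts := by
  constructor
  · rintro (_ | ⟨hlen, h⟩)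
    exact ⟨_, rfl, List.forall₂_iff_get.2 ⟨hlen.symm, fun i _ _ => h ⟨i, _⟩⟩⟩
  · rintro ⟨ts, rfl, h⟩
    exact .out h.length_eq.symm fun i => List.forall₂_iff_get.1 h |>.2 i _ _

theorem oiSub_singleton_param_iff {u : ST Γ Δ Q} {t : OT Δ} :
    OISub rsel [u] (.node (.param 0) []) t ↔ SemOI rsel u t := by
  constructor
  · rintro ⟨_, h⟩
    exact h
  · exact .param (us := [u]) Nat.one_pos

theorem oiSub_out_iff {us : List (ST Γ Δ Q)} {d : Δ} {ts : List (OT Δ)} {t : OT Δ} :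
    OISub rsel us (.node (.out d) ts) t ↔
      ∃ ts', t = .node (.out d) ts' ∧ List.Forall₂ (OISub rsel us) ts ts' := by
  constructor
  · rintro (_ | ⟨hlen, h⟩)
    exact ⟨_, rfl, List.forall₂_iff_get.2 ⟨hlen.symm, fun i _ _ => h ⟨i, _⟩⟩⟩
  · rintro ⟨ts', rfl, h⟩
    exact .out h.length_eq.symm fun i => List.forall₂_iff_get.1 h |>.2 i _ _

theorem semOI_binary_iff {d : Δ} {u₁ u₂ : ST Γ Δ Q} {t : OT Δ} :
    SemOI rsel (.node (.out d) [u₁, u₂]) t ↔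
      ∃ t₁ t₂, t = .node (.out d) [t₁, t₂] ∧ SemOI rsel u₁ t₁ ∧ SemOI rsel u₂ t₂ := by
  simp [semOI_out_iff, List.forall₂_cons_left_iff]

theorem oiSub_binary_iff {us : List (ST Γ Δ Q)} {d : Δ} {l r t : OT Δ} :
    OISub rsel us (.node (.out d) [l, r]) t ↔
      ∃ l' r', t = .node (.out d) [l', r'] ∧ OISub rsel us l l' ∧ OISub rsel us r r' := by
  simp [oiSub_out_iff, List.forall₂_cons_left_iff]

end OISemantics

theorem semOI_plainSel_call_iff {Γ Δ Q : Type} {rules : Q → Γ → Set (Rhs Δ Q)} {q : Q} {σ : Γ}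
    {ss : List (RTree Γ)} {us : List (ST Γ Δ Q)} {t : OT Δ} :
    SemOI (plainSel rules) (.node (.call q (.node σ ss)) us) t ↔
      ∃ t₀, (∃ r ∈ rules q σ, SemOI (plainSel rules) (substX ss r) t₀) ∧
        OISub (plainSel rules) us t₀ t := by
  constructor
  · rintro (_ | _ | ⟨hr, h₀, hs⟩)
    exact ⟨_, ⟨_, hr, h₀⟩, hs⟩
  · rintro ⟨t₀, ⟨r, hr, h₀⟩, hs⟩
    exact .call hr h₀ hs

inductive PerfectOver (S : OT DE → Prop) : ℕ → OT DE → Prop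
  | base {t : OT DE} : S t → PerfectOver S 0 t
  | node {h : ℕ} {d : DE} {l r : OT DE} (hd : d = .f ∨ d = .g)
      (hl : PerfectOver S h l) (hr : PerfectOver S h r) :
      PerfectOver S (h + 1) (.node (.out d) [l, r])

namespace PerfectOver

variable {S S' : OT DE → Prop}

theorem mono (hS : ∀ t, S t → S' t) {h : ℕ} {t : OT DE} (hp : PerfectOver S h t) :
    PerfectOver S' h t := by
  induction hp with
  | base ht => exact .base (hS _ ht)
  | node hd _ _ ihl ihr => exact .node hd ihl ihr

theorem congr_iff (hS : ∀ t, S t ↔ S' t) {h : ℕ} {t : OT DE} :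
    PerfectOver S h t ↔ PerfectOver S' h t :=
  ⟨mono fun t => (hS t).1, mono fun t => (hS t).2⟩

theorem zero_iff {t : OT DE} : PerfectOver S 0 t ↔ S t :=
  ⟨fun (.base ht) => ht, .base⟩

theorem succ_iff {h : ℕ} {t : OT DE} :
    PerfectOver S (h + 1) t ↔ ∃ d l r, (d = .f ∨ d = .g) ∧ t = .node (.out d) [l, r] ∧
      PerfectOver S h l ∧ PerfectOver S h r := by
  constructor
  · rintro (_ | ⟨hd, hl, hr⟩)
    exact ⟨_, _, _, hd, rfl, hl, hr⟩
  · rintro ⟨d, l, r, hd, rfl, hl, hr⟩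
    exact .node hd hl hr

theorem perfectOver_iff (h₁ : ℕ) {h₂ : ℕ} {t : OT DE} :
    PerfectOver (PerfectOver S h₂) h₁ t ↔ PerfectOver S (h₁ + h₂) t := by
  induction h₁ generalizing t with
  | zero => rw [zero_iff, Nat.zero_add]
  | succ h₁ ih => simp only [Nat.succ_add, succ_iff, ih]

end PerfectOver

section Substitution

variable {Γ Q : Type} {rsel : Q → Γ → List (RTree Γ) → Set (Rhs DE Q)}

theorem exists_oiSub_perfectOver_param_iff (u : ST Γ DE Q) (h : ℕ) {t : OT DE} :
    (∃ t₀, PerfectOver (· = .node (.param 0) []) h t₀ ∧ OISub rsel [u] t₀ t) ↔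
      PerfectOver (SemOI rsel u) h t := by
  induction h generalizing t with
  | zero => simp [PerfectOver.zero_iff, oiSub_singleton_param_iff]
  | succ h ih =>
    simp only [PerfectOver.succ_iff, ← ih]
    constructor
    · rintro ⟨_, ⟨d, l, r, hd, rfl, hl, hr⟩, hs⟩
      obtain ⟨l', r', rfl, hsl, hsr⟩ := oiSub_binary_iff.1 hs
      exact ⟨d, l', r', hd, rfl, ⟨l, hl, hsl⟩, ⟨r, hr, hsr⟩⟩
    · rintro ⟨d, l', r', hd, rfl, ⟨l, hl, hsl⟩, ⟨r, hr, hsr⟩⟩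
      exact ⟨_, ⟨d, l, r, hd, rfl, hl, hr⟩, oiSub_binary_iff.2 ⟨l', r', rfl, hsl, hsr⟩⟩

theorem oiSub_iff_eq_of_perfectOver {us : List (ST Γ DE Q)} {h : ℕ} {t₀ t : OT DE}
    (h₀ : PerfectOver (· = .node (.out .e) []) h t₀) : OISub rsel us t₀ t ↔ t = t₀ := by
  induction h₀ generalizing t with
  | base ht => subst ht; simp [oiSub_out_iff]
  | node _ _ _ ihl ihr => simp [oiSub_binary_iff, ihl, ihr]

end Substitution

theorem perfect_zero_iff {t : RTree DE} : Perfect 0 t ↔ t = .node .e [] :=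
  ⟨fun .leaf => rfl, fun ht => ht ▸ .leaf⟩

theorem perfect_succ_iff {h : ℕ} {t : RTree DE} :
    Perfect (h + 1) t ↔ ∃ d l r, (d = .f ∨ d = .g) ∧ t = .node d [l, r] ∧
      Perfect h l ∧ Perfect h r := by
  constructor
  · rintro (_ | ⟨hd, hl, hr⟩)
    exact ⟨_, _, _, hd, rfl, hl, hr⟩
  · rintro ⟨d, l, r, hd, rfl, hl, hr⟩
    exact .node hd hl hr

theorem perfect_iff_perfectOver_embed {h : ℕ} {t : RTree DE} :
    Perfect h t ↔ PerfectOver (· = .node (.out .e) []) h (embed t) := by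
  induction h generalizing t with
  | zero =>
    obtain ⟨a, ts⟩ := t
    simp [perfect_zero_iff, PerfectOver.zero_iff, embed_node]
  | succ h ih =>
    rw [perfect_succ_iff, PerfectOver.succ_iff]
    constructor
    · rintro ⟨d, l, r, hd, rfl, hl, hr⟩
      exact ⟨d, embed l, embed r, hd, embed_node _ _, ih.1 hl, ih.1 hr⟩
    · rintro ⟨d, l, r, hd, he, hl, hr⟩
      obtain ⟨a, ts⟩ := t
      simp only [embed_node, RTree.node.injEq, OLab.out.injEq, List.map_eq_cons_iff,
        List.map_eq_nil_iff] at he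
      obtain ⟨rfl, l₀, _, rfl, rfl, r₀, _, rfl, rfl, rfl⟩ := he
      exact ⟨a, l₀, r₀, hd, rfl, ih.2 hl, ih.2 hr⟩

theorem semOI_double_iff (k : ℕ) (u : ST GE DE QE) {t : OT DE} :
    SemOI (plainSel rulesEx) (.node (.call .double (sN k)) [u]) t ↔
      PerfectOver (SemOI (plainSel rulesEx) u) (2 ^ k) t := by
  induction k generalizing u t with
  | zero =>
    rw [sN, semOI_plainSel_call_iff, ← exists_oiSub_perfectOver_param_iff]
    refine exists_congr fun t₀ => and_congr_left' ?_
    rw [show 2 ^ 0 = 0 + 1 from rfl]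
    simp [rulesEx, substX_node, RLab.subst, semOI_binary_iff, semOI_param_iff,
      PerfectOver.succ_iff, PerfectOver.zero_iff]
  | succ k ih =>
    rw [sN, semOI_plainSel_call_iff, ← exists_oiSub_perfectOver_param_iff]
    refine exists_congr fun t₀ => and_congr_left' ?_
    simp only [rulesEx, Set.mem_singleton_iff, exists_eq_left, substX_node, RLab.subst,
      List.getElem?_cons_zero, List.map_cons, List.map_nil]
    rw [ih, PerfectOver.congr_iff fun _ =>
        (ih _).trans (PerfectOver.congr_iff fun _ => semOI_param_iff),
      PerfectOver.perfectOver_iff, pow_succ, mul_two]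

theorem semOI_start_iff (m : ℕ) {t : OT DE} :
    SemOI (plainSel rulesEx) (.node (.call .start (sN (m + 1))) []) t ↔
      PerfectOver (· = .node (.out .e) []) (2 ^ (m + 1)) t := by
  have hleaf : ∀ t : OT DE, SemOI (plainSel rulesEx) (.node (.out .e) []) t ↔
      t = .node (.out .e) [] := fun _ => by simp [semOI_out_iff]
  rw [sN, semOI_plainSel_call_iff]
  simp only [rulesEx, Set.mem_singleton_iff, exists_eq_left, substX_node, RLab.subst,
    List.getElem?_cons_zero, List.map_cons, List.map_nil, semOI_double_iff,
    PerfectOver.congr_iff fun _ => (semOI_double_iff _ _).trans (PerfectOver.congr_iff hleaf),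
    PerfectOver.perfectOver_iff, ← mul_two, ← pow_succ]
  exact ⟨fun ⟨t₀, h₀, hs⟩ => (oiSub_iff_eq_of_perfectOver h₀).1 hs ▸ h₀,
    fun ht => ⟨t, ht, (oiSub_iff_eq_of_perfectOver ht).2 rfl⟩⟩

theorem setOf_perfect_succ (h : ℕ) :
    {t | Perfect (h + 1) t} =
      (fun p : Bool × RTree DE × RTree DE => .node (if p.1 then .f else .g) [p.2.1, p.2.2]) ''
        (Set.univ ×ˢ {t | Perfect h t} ×ˢ {t | Perfect h t}) := by
  ext t
  simp only [Set.mem_ofPred_eq, perfect_succ_iff, Set.mem_image, Set.mem_prod, Set.mem_univ,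
    true_and, Prod.exists]
  constructor
  · rintro ⟨d, l, r, hd | hd, rfl, hl, hr⟩ <;> subst hd
    exacts [⟨true, l, r, ⟨hl, hr⟩, rfl⟩, ⟨false, l, r, ⟨hl, hr⟩, rfl⟩]
  · rintro ⟨b, l, r, ⟨hl, hr⟩, rfl⟩
    exact ⟨_, l, r, by cases b <;> simp, rfl, hl, hr⟩

theorem ncard_setOf_perfect (h : ℕ) : {t | Perfect h t}.ncard = 2 ^ (2 ^ h - 1) := by
  induction h with
  | zero => simp [perfect_zero_iff]
  | succ h ih =>
    have hinj : Function.Injective fun p : Bool × RTree DE × RTree DE =>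
        RTree.node (if p.1 then DE.f else .g) [p.2.1, p.2.2] := by
      rintro ⟨b, l, r⟩ ⟨b', l', r'⟩ he
      cases b <;> cases b' <;> simp_all
    rw [setOf_perfect_succ, Set.ncard_image_of_injective _ hinj, Set.ncard_prod,
      Set.ncard_prod, ih, Set.ncard_univ, Nat.card_eq_fintype_card, Fintype.card_bool,
      ← pow_add, ← pow_succ']
    have hpos : 1 ≤ 2 ^ h := Nat.one_le_two_pow
    congr 1
    rw [pow_succ]
    omega

/-- For every `n ≥ 1`, the set `⟦⟨start, s_n⟩⟧_OI` of outputs of the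
mtt `M_ex` in OI-mode on input `s_n` equals the set of all perfect `{f,g}`-trees
of height `2^n`; in particular, this set has cardinality `2^(2^(2^n) − 1)`. -/
theorem oi_outputs_of_Mex (n : ℕ) (hn : 1 ≤ n) :
    ({t : RTree DE | SemOI (plainSel rulesEx) (.node (.call .start (sN n)) []) (embed t)}
        = {t | Perfect (2^n) t}) ∧
    {t : RTree DE | SemOI (plainSel rulesEx) (.node (.call .start (sN n)) []) (embed t)}.ncard
        = 2 ^ (2 ^ 2 ^ n - 1) := by
  obtain ⟨m, rfl⟩ := Nat.exists_eq_add_of_le' hn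
  have hout : {t : RTree DE | SemOI (plainSel rulesEx) (.node (.call .start (sN (m + 1))) [])
      (embed t)} = {t | Perfect (2 ^ (m + 1)) t} := by
    ext t
    exact (semOI_start_iff m).trans perfect_iff_perfectOver_embed.symm
  exact ⟨hout, hout ▸ ncard_setOf_perfect _⟩

end MttF
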